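/- A pattern of length n (even) is a 2×n matrix over {0,1}, with columns indexed by Z/n, such that P(1,i) = 1 implies P(2,i) = 1. If P is a proper pattern, then its μ-invariant satisfies 0 ≤ μ(P) ≤ n/4. -/
import Mathlib


open scoped Classical

noncomputable section

/-- A pattern of length `n`: a `2 × n` matrix over `{0,1}` with columns indexed cyclically
by `ZMod n`, such that a `1` in the first row always has a `1` below it in the second row. -/
structure Pattern (n : ℕ) where
  row1 : ZMod n → Bool
  row2 : ZMod n → Bool
  le : ∀ i, row1 i = true → row2 i = true

namespace Pattern

/-- `i` starts a block of the cyclic row `r`: a maximal group of at least three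
consecutive `1`s bounded by `0`s begins at position `i`. -/
def BlockStart {n : ℕ} (r : ZMod n → Bool) (i : ZMod n) : Prop :=
  r (i - 1) = false ∧ r i = true ∧ r (i + 1) = true ∧ r (i + 2) = true

/-- The number of blocks (maximal groups of at least three consecutive `1`s bounded by
`0`s) of the cyclic row `r`. -/
def numBlocks {n : ℕ} [NeZero n] (r : ZMod n → Bool) : ℕ :=
  (Finset.univ.filter fun i : ZMod n => BlockStart r i).card

/-- A singleton of the row `r` at position `i`: a `1` with a `0` on either side. -/
def SingletonAt {n : ℕ} (r : ZMod n → Bool) (i : ZMod n) : Prop :=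
  r (i - 1) = false ∧ r i = true ∧ r (i + 1) = false

/-- The block of `r` starting at `i` has length exactly `l ≥ 3`. -/
def BlockAt {n : ℕ} (r : ZMod n → Bool) (i : ZMod n) (l : ℕ) : Prop :=
  3 ≤ l ∧ r (i - 1) = false ∧ r (i + (l : ZMod n)) = false ∧
    ∀ k < l, r (i + (k : ZMod n)) = true

/-- The cyclic row `r` is a run: it consists of blocks and singletons separated by single
`0`s (no two consecutive `0`s, and no maximal group of exactly two `1`s). -/
def IsRun {n : ℕ} (r : ZMod n → Bool) : Prop :=
  (∃ i, r i = true) ∧ (∃ i, r i = false) ∧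
  (∀ i, r i = true ∨ r (i + 1) = true) ∧
  (∀ i, ¬ (r (i - 1) = false ∧ r i = true ∧ r (i + 1) = true ∧ r (i + 2) = false))

/-- A nice run: a run all of whose blocks have length exactly 3. -/
def IsNiceRun {n : ℕ} (r : ZMod n → Bool) : Prop :=
  IsRun r ∧ ∀ i, BlockStart r i → r (i + 3) = false

/-- The part of the row `r` above the positions `i, i+1, …, i+l-1` (a block of the other
row of length `l ≥ 4`) is a nice run subject to the boundary conditions: the outermost
group of `1`s on the left is either a block (of length 3) starting exactly above the 3rd
position, or a singleton above the 2nd or 3rd position; symmetrically on the right. -/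
def NiceRunOn {n : ℕ} (r : ZMod n → Bool) (i : ZMod n) (l : ℕ) : Prop :=
  (∃ a : ℕ, a < l ∧ r (i + (a : ZMod n)) = true) ∧
  r i = false ∧ r (i + ((l - 1 : ℕ) : ZMod n)) = false ∧
  (r (i + 1) = true ∨ r (i + 2) = true) ∧
  (r (i + 1) = true → r (i + 2) = false) ∧
  (r (i + ((l - 2 : ℕ) : ZMod n)) = true ∨ r (i + ((l - 3 : ℕ) : ZMod n)) = true) ∧
  (r (i + ((l - 2 : ℕ) : ZMod n)) = true → r (i + ((l - 3 : ℕ) : ZMod n)) = false) ∧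
  (∀ k : ℕ, k + 1 < l → r (i + (k : ZMod n)) = false →
    r (i + ((k + 1 : ℕ) : ZMod n)) = false →
    (∀ m : ℕ, m < l → r (i + (m : ZMod n)) = true → m < k) ∨
    (∀ m : ℕ, m < l → r (i + (m : ZMod n)) = true → k + 1 < m)) ∧
  (∀ k : ℕ, k + 3 ≤ l → (k = 0 ∨ r (i + ((k - 1 : ℕ) : ZMod n)) = false) →
    r (i + (k : ZMod n)) = true → r (i + ((k + 1 : ℕ) : ZMod n)) = true →
    (r (i + ((k + 2 : ℕ) : ZMod n)) = true ∧
      (k + 3 = l ∨ r (i + ((k + 3 : ℕ) : ZMod n)) = false)))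

/-- A proper pattern. -/
def Proper {n : ℕ} (P : Pattern n) : Prop :=
  (IsRun P.row2 ∨ ∀ i, P.row2 i = true) ∧
  ((∀ i, P.row2 i = true) → IsNiceRun P.row1) ∧
  (∀ i, SingletonAt P.row2 i → P.row1 i = false) ∧
  (∀ i, BlockAt P.row2 i 3 → ∀ k : ℕ, k < 3 → P.row1 (i + (k : ZMod n)) = false) ∧
  (∀ i, ∀ l : ℕ, 4 ≤ l → BlockAt P.row2 i l → NiceRunOn P.row1 i l)

/-- The `μ`-invariant of a proper pattern: the number of blocks in the first row plus the
number of blocks in the second row. -/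
def mu {n : ℕ} [NeZero n] (P : Pattern n) : ℕ :=
  numBlocks P.row1 + numBlocks P.row2

end Pattern

namespace MuAux

variable {n : ℕ}

lemma cast_ne_zero' [NeZero n] {m : ℕ} (h1 : m ≠ 0) (h2 : m < n) : ((m : ℕ) : ZMod n) ≠ 0 := by
  intro h
  have := congrArg ZMod.val h
  rw [ZMod.val_cast_of_lt h2, ZMod.val_zero] at this
  exact h1 this

lemma cast_inj' [NeZero n] {a b : ℕ} (ha : a < n) (hb : b < n)
    (h : ((a : ℕ) : ZMod n) = ((b : ℕ) : ZMod n)) : a = b := by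
  have := congrArg ZMod.val h
  rwa [ZMod.val_cast_of_lt ha, ZMod.val_cast_of_lt hb] at this

lemma add_nat_inj [NeZero n] (i : ZMod n) {a b : ℕ} (ha : a < n) (hb : b < n)
    (h : i + ((a : ℕ) : ZMod n) = i + ((b : ℕ) : ZMod n)) : a = b :=
  cast_inj' ha hb (by exact add_left_cancel h)

lemma cast_pred {a : ℕ} (ha : 1 ≤ a) : ((a : ℕ) : ZMod n) - 1 = ((a - 1 : ℕ) : ZMod n) := by
  have h2 : ((a : ℕ) : ZMod n) = ((a - 1 : ℕ) : ZMod n) + 1 := by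
    conv_lhs => rw [show a = a - 1 + 1 by omega]
    push_cast; ring
  rw [h2]; ring

lemma start_unique_aux {r : ZMod n → Bool} {j j' : ZMod n} {l : ℕ}
    (hjl : ∀ c < l, r (j + (c : ℕ)) = true)
    (hj1' : r (j' - 1) = false)
    {a a' : ℕ} (hab : a' ≤ a) (hd : a - a' ≤ l)
    (h : j + (a : ℕ) = j' + (a' : ℕ)) : j = j' := by
  have hj'eq : j' = j + ((a - a' : ℕ) : ZMod n) := by
    have hc : ((a : ℕ) : ZMod n) = ((a - a' : ℕ) : ZMod n) + ((a' : ℕ) : ZMod n) := by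
      rw [← Nat.cast_add]; congr 1; omega
    rw [hc] at h
    linear_combination -h
  rcases Nat.eq_zero_or_pos (a - a') with h0 | h0
  · rw [hj'eq, h0]; simp
  · exfalso
    have ht : r (j + ((a - a' - 1 : ℕ) : ZMod n)) = true := hjl _ (by omega)
    have he : j' - 1 = j + ((a - a' - 1 : ℕ) : ZMod n) := by
      rw [hj'eq, add_sub_assoc, cast_pred h0]
    rw [he, ht] at hj1'
    exact absurd hj1' (by simp)

lemma start_unique {r : ZMod n → Bool} {j j' : ZMod n} {l l' : ℕ}
    (hj1 : r (j - 1) = false) (hjl : ∀ c < l, r (j + (c : ℕ)) = true)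
    (hj1' : r (j' - 1) = false) (hjl' : ∀ c < l', r (j' + (c : ℕ)) = true)
    {a a' : ℕ} (ha : a < l) (ha' : a' < l')
    (h : j + (a : ℕ) = j' + (a' : ℕ)) : j = j' := by
  rcases le_total a' a with hle | hle
  · exact start_unique_aux hjl hj1' hle (by omega) h
  · exact (start_unique_aux hjl' hj1 hle (by omega) h.symm).symm

lemma bs_true {r : ZMod n → Bool} {i : ZMod n} (hi : Pattern.BlockStart r i)
    {c : ℕ} (hc : c < 3) : r (i + (c : ℕ)) = true := by
  interval_cases c
  · simpa using hi.2.1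
  · simpa using hi.2.2.1
  · rw [show ((2 : ℕ) : ZMod n) = 2 by push_cast; ring]; exact hi.2.2.2

/-- distinct block starts of the same row are at least 4 apart -/
lemma bs_apart {r : ZMod n → Bool} {i i' : ZMod n}
    (hi : Pattern.BlockStart r i) (hi' : Pattern.BlockStart r i')
    {a b : ℕ} (ha : a ≤ 3) (hb : b ≤ 3)
    (h : i + (a : ℕ) = i' + (b : ℕ)) : i = i' := by
  rcases le_total b a with hle | hle
  · exact start_unique_aux (fun c hc => bs_true hi hc) hi'.1 hle (by omega) h
  · exact (start_unique_aux (fun c hc => bs_true hi' hc) hi.1 hle (by omega) h.symm).symm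

/-- length of the maximal run of `true`s starting at `j` -/
noncomputable def blen (r : ZMod n → Bool) (j : ZMod n) : ℕ :=
  if h : ∃ l : ℕ, r (j + (l : ℕ)) = false then Nat.find h else 0

lemma blen_false {r : ZMod n → Bool} {j : ZMod n} (h : ∃ l : ℕ, r (j + (l : ℕ)) = false) :
    r (j + ((blen r j : ℕ) : ZMod n)) = false := by
  rw [blen, dif_pos h]; exact Nat.find_spec h

lemma blen_true {r : ZMod n → Bool} {j : ZMod n} (h : ∃ l : ℕ, r (j + (l : ℕ)) = false)
    {a : ℕ} (ha : a < blen r j) : r (j + (a : ℕ)) = true := by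
  rw [blen, dif_pos h] at ha
  have := Nat.find_min h ha
  simpa using this

lemma blen_le {r : ZMod n → Bool} {j : ZMod n} (h : ∃ l : ℕ, r (j + (l : ℕ)) = false)
    {m : ℕ} (hm : r (j + (m : ℕ)) = false) : blen r j ≤ m := by
  rw [blen, dif_pos h]; exact Nat.find_min' h hm

lemma exists_off [NeZero n] {r : ZMod n → Bool} (j : ZMod n) {i0 : ZMod n} (h : r i0 = false) :
    ∃ l : ℕ, r (j + (l : ℕ)) = false := by
  refine ⟨(i0 - j).val, ?_⟩
  rw [ZMod.natCast_val, ZMod.cast_id, show j + (i0 - j) = i0 by ring]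
  exact h

lemma blen_lt_n [NeZero n] {r : ZMod n → Bool} (j : ZMod n) {i0 : ZMod n} (h : r i0 = false) :
    blen r j < n := by
  have hle := blen_le (exists_off j h) (m := (i0 - j).val)
    (by rw [ZMod.natCast_val, ZMod.cast_id, show j + (i0 - j) = i0 by ring]; exact h)
  exact lt_of_le_of_lt hle (ZMod.val_lt _)

lemma card4 {α : Type*} [DecidableEq α] {a b c d : α} (hab : a ≠ b) (hac : a ≠ c)
    (had : a ≠ d) (hbc : b ≠ c) (hbd : b ≠ d) (hcd : c ≠ d) :
    ({a, b, c, d} : Finset α).card = 4 := by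
  rw [Finset.card_insert_of_notMem (by simp [hab, hac, had]),
    Finset.card_insert_of_notMem (by simp [hbc, hbd]),
    Finset.card_insert_of_notMem (by simp [hcd]), Finset.card_singleton]

lemma count_bound {α : Type*} [DecidableEq α] (S : Finset α) (f : α → Finset α)
    (hc : ∀ i ∈ S, (f i).card = 4)
    (hd : ∀ i ∈ S, ∀ i' ∈ S, i ≠ i' → Disjoint (f i) (f i')) :
    (S.biUnion f).card = 4 * S.card := by
  rw [Finset.card_biUnion hd, Finset.sum_congr rfl hc, Finset.sum_const, smul_eq_mul, mul_comm]

end MuAux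
namespace MuAux

lemma S1_struct {n : ℕ} [NeZero n] (P : Pattern n) (hP : P.Proper)
    (hrun : Pattern.IsRun P.row2) {i : ZMod n} (hbs : Pattern.BlockStart P.row1 i) :
    ∃ (j : ZMod n) (k : ℕ),
      P.row2 (j - 1) = false ∧ (∀ a < blen P.row2 j, P.row2 (j + (a : ℕ)) = true) ∧
      2 ≤ k ∧ k + 3 ≤ blen P.row2 j - 2 ∧ blen P.row2 j < n ∧ i = j + (k : ℕ) := by
  obtain ⟨hP1, hP2, hP3, hP4, hP5⟩ := hP
  obtain ⟨-, ⟨i0, hi0⟩, -, hno2⟩ := hrun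
  have hr2i : P.row2 i = true := P.le i hbs.2.1
  have hexB : ∃ b : ℕ, P.row2 (i - ((b + 1 : ℕ) : ZMod n)) = false := by
    have hne : i0 ≠ i := by intro h; rw [h, hr2i] at hi0; cases hi0
    refine ⟨(i - i0).val - 1, ?_⟩
    have hv : 1 ≤ (i - i0).val := by
      rcases Nat.eq_zero_or_pos (i - i0).val with h | h
      · exact absurd (by have := (ZMod.val_eq_zero _).mp h; linear_combination -this) hne
      · exact h
    rw [show (i - i0).val - 1 + 1 = (i - i0).val by omega, ZMod.natCast_val, ZMod.cast_id,
      show i - (i - i0) = i0 by ring]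
    exact hi0
  set B := Nat.find hexB with hB
  have hBfalse := Nat.find_spec hexB
  have hBmin : ∀ b < B, P.row2 (i - ((b + 1 : ℕ) : ZMod n)) = true := by
    intro b hb
    have := Nat.find_min hexB hb
    simpa using this
  set j := i - ((B : ℕ) : ZMod n) with hj
  have hij : i = j + (B : ℕ) := by rw [hj]; ring
  have hj1 : P.row2 (j - 1) = false := by
    rw [show j - 1 = i - ((B + 1 : ℕ) : ZMod n) by rw [hj]; push_cast; ring]
    exact hBfalse
  have htrueB : ∀ t ≤ B, P.row2 (j + (t : ℕ)) = true := by
    intro t ht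
    rcases eq_or_lt_of_le ht with he | hlt
    · rw [he, ← hij]; exact hr2i
    · have heq : j + (t : ℕ) = i - ((B - t - 1 + 1 : ℕ) : ZMod n) := by
        rw [hj]
        rw [show ((B : ℕ) : ZMod n) = ((B - t - 1 + 1 : ℕ) : ZMod n) + ((t : ℕ) : ZMod n) by
          rw [← Nat.cast_add]; congr 1; omega]
        ring
      rw [heq]
      exact hBmin _ (by omega)
  have hexL : ∃ l : ℕ, P.row2 (j + (l : ℕ)) = false := exists_off j hi0
  have hlf := blen_false hexL
  have hltr : ∀ a < blen P.row2 j, P.row2 (j + (a : ℕ)) = true := fun a ha => blen_true hexL ha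
  set l := blen P.row2 j with hl
  have hBl : B < l := by
    by_contra h
    push_neg at h
    have := htrueB l h
    rw [this] at hlf; cases hlf
  have hln : l < n := blen_lt_n j hi0
  have hl1 : l ≠ 1 := by
    intro h
    have hsing : Pattern.SingletonAt P.row2 j := by
      refine ⟨hj1, by simpa using htrueB 0 (by omega), ?_⟩
      have := hlf; rw [h] at this; simpa using this
    have hfin := hP3 j hsing
    have : P.row1 i = false := by
      rw [hij, show B = 0 by omega]; simpa using hfin
    rw [hbs.2.1] at this; cases this
  have hl2 : l ≠ 2 := by
    intro h
    apply hno2 j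
    refine ⟨hj1, by simpa using hltr 0 (by omega), by simpa using hltr 1 (by omega), ?_⟩
    have := hlf; rw [h] at this
    rw [show ((2 : ℕ) : ZMod n) = 2 by push_cast; ring] at this
    exact this
  have hl3 : l ≠ 3 := by
    intro h
    have hba : Pattern.BlockAt P.row2 j 3 := by
      refine ⟨le_refl 3, hj1, ?_, fun k hk => hltr k (by omega)⟩
      have := hlf; rw [h] at this; exact this
    have hfin := hP4 j hba B (by omega)
    rw [← hij] at hfin
    rw [hbs.2.1] at hfin; cases hfin
  have hl4 : 4 ≤ l := by omega
  have hba : Pattern.BlockAt P.row2 j l := ⟨by omega, hj1, hlf, hltr⟩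
  have hnice := hP5 j l hl4 hba
  obtain ⟨-, hn0, hnl1, -, hn12, -, hnl2, -, -⟩ := hnice
  have hoff : ∀ t : ℕ, t ≤ 2 → P.row1 (j + ((B + t : ℕ) : ZMod n)) = true := by
    intro t ht
    have hc : i + ((t : ℕ) : ZMod n) = j + ((B + t : ℕ) : ZMod n) := by
      rw [hij]; push_cast; ring
    rw [← hc]
    interval_cases t
    · simpa using hbs.2.1
    · simpa using hbs.2.2.1
    · rw [show ((2 : ℕ) : ZMod n) = 2 by push_cast; ring]; exact hbs.2.2.2
  have hB0 : B ≠ 0 := by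
    intro h
    have h0 := hoff 0 (by omega)
    rw [h] at h0
    simp only [Nat.add_zero, Nat.cast_zero, add_zero] at h0
    rw [hn0] at h0; cases h0
  have hB1 : B ≠ 1 := by
    intro h
    have h0 := hoff 0 (by omega)
    have h1 := hoff 1 (by omega)
    rw [h] at h0 h1
    simp only [Nat.add_zero, Nat.cast_one] at h0
    rw [show ((1 + 1 : ℕ) : ZMod n) = 2 by push_cast; ring] at h1
    rw [hn12 h0] at h1; cases h1
  have hBl1 : B + 1 ≠ l := by
    intro h
    have h1 := P.le _ (hoff 1 (by omega))
    rw [h] at h1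
    rw [h1] at hlf; cases hlf
  have hBl2 : B + 2 ≠ l := by
    intro h
    have h2 := P.le _ (hoff 2 (by omega))
    rw [h] at h2
    rw [h2] at hlf; cases hlf
  have hBm1 : B + 2 ≠ l - 1 := by
    intro h
    have h2 := hoff 2 (by omega)
    rw [h] at h2
    rw [hnl1] at h2; cases h2
  have hBm2 : B + 2 ≠ l - 2 := by
    intro h
    have h2 := hoff 2 (by omega)
    rw [h] at h2
    have h3 := hnl2 h2
    have h1 := hoff 1 (by omega)
    rw [show B + 1 = l - 3 by omega] at h1
    rw [h3] at h1; cases h1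
  exact ⟨j, B, hj1, hltr, by omega, by omega, hln, hij⟩

end MuAux
namespace MuAux

variable {n : ℕ}

/-- columns assigned to a first-row block -/
def f1 (i : ZMod n) : Finset (ZMod n) :=
  {i + ((0 : ℕ) : ZMod n), i + ((1 : ℕ) : ZMod n), i + ((2 : ℕ) : ZMod n), i + ((3 : ℕ) : ZMod n)}

/-- columns assigned to a second-row block -/
noncomputable def f2 (r : ZMod n → Bool) (j : ZMod n) : Finset (ZMod n) :=
  {j - 1, j + ((0 : ℕ) : ZMod n), j + ((1 : ℕ) : ZMod n),
    j + ((blen r j - 1 : ℕ) : ZMod n)}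

lemma mem_f1 {i x : ZMod n} (hx : x ∈ f1 i) :
    ∃ t : ℕ, t ≤ 3 ∧ x = i + ((t : ℕ) : ZMod n) := by
  simp only [f1, Finset.mem_insert, Finset.mem_singleton] at hx
  rcases hx with h | h | h | h
  exacts [⟨0, by omega, h⟩, ⟨1, by omega, h⟩, ⟨2, by omega, h⟩, ⟨3, by omega, h⟩]

lemma mem_f2 {r : ZMod n → Bool} {j x : ZMod n} (hx : x ∈ f2 r j) :
    x = j - 1 ∨ ∃ a : ℕ, (a = 0 ∨ a = 1 ∨ a = blen r j - 1) ∧ x = j + ((a : ℕ) : ZMod n) := by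
  simp only [f2, Finset.mem_insert, Finset.mem_singleton] at hx
  rcases hx with h | h | h | h
  · exact Or.inl h
  · exact Or.inr ⟨0, by omega, h⟩
  · exact Or.inr ⟨1, by omega, h⟩
  · exact Or.inr ⟨blen r j - 1, by omega, h⟩

lemma card_f1 [NeZero n] (hn4 : 4 ≤ n) (i : ZMod n) : (f1 i).card = 4 := by
  refine card4 ?_ ?_ ?_ ?_ ?_ ?_ <;> intro h <;>
    exact absurd (add_nat_inj _ (by omega) (by omega) h) (by omega)

lemma sep_ne [NeZero n] (j : ZMod n) {a : ℕ} (ha : a + 1 < n) :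
    j - 1 ≠ j + ((a : ℕ) : ZMod n) := by
  intro h
  have h2 : ((a + 1 : ℕ) : ZMod n) = 0 := by push_cast; linear_combination -h
  exact cast_ne_zero' (by omega) ha h2

lemma card_f2 [NeZero n] {r : ZMod n → Bool} {j : ZMod n}
    (h3 : 3 ≤ blen r j) (hlt : blen r j < n) : (f2 r j).card = 4 := by
  refine card4 (sep_ne j (by omega)) (sep_ne j (by omega)) (sep_ne j (by omega))
    ?_ ?_ ?_ <;> intro h <;>
    exact absurd (add_nat_inj _ (by omega) (by omega) h) (by omega)

end MuAux
/-- For every proper pattern `P` of even length `n`, `0 ≤ μ(P) ≤ n/4`. -/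
theorem stmt_14 (n : ℕ) [NeZero n] (hn : Even n) (P : Pattern n) (hP : P.Proper) :
    P.mu ≤ n / 4 := by
  rw [Nat.le_div_iff_mul_le (by norm_num : 0 < 4)]
  have hn0 : n ≠ 0 := NeZero.ne n
  have hmu : P.mu = Pattern.numBlocks P.row1 + Pattern.numBlocks P.row2 := rfl
  by_cases hn2 : n = 2
  · subst hn2
    have hno : ∀ (r : ZMod 2 → Bool) (i : ZMod 2), ¬ Pattern.BlockStart r i := by
      intro r i h
      obtain ⟨h1, h2, h3, h4⟩ := h
      have he : i + 1 = i - 1 := by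
        have h5 : (2 : ZMod 2) = 0 := by decide
        linear_combination h5
      rw [he, h1] at h3
      cases h3
    have e1 : Pattern.numBlocks P.row1 = 0 := by
      rw [Pattern.numBlocks, Finset.card_eq_zero, Finset.filter_eq_empty_iff]
      intro i _
      exact hno _ i
    have e2 : Pattern.numBlocks P.row2 = 0 := by
      rw [Pattern.numBlocks, Finset.card_eq_zero, Finset.filter_eq_empty_iff]
      intro i _
      exact hno _ i
    omega
  · have hn4 : 4 ≤ n := by obtain ⟨k, hk⟩ := hn; omega
    set S1 := Finset.univ.filter (fun i : ZMod n => Pattern.BlockStart P.row1 i) with hS1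
    set S2 := Finset.univ.filter (fun i : ZMod n => Pattern.BlockStart P.row2 i) with hS2
    have hmu1 : Pattern.numBlocks P.row1 = S1.card := rfl
    have hmu2 : Pattern.numBlocks P.row2 = S2.card := rfl
    -- disjointness within the first row
    have hD1 : ∀ i ∈ S1, ∀ i' ∈ S1, i ≠ i' → Disjoint (MuAux.f1 i) (MuAux.f1 i') := by
      intro i hi i' hi' hne
      rw [Finset.disjoint_left]
      intro x hx hx'
      obtain ⟨t, ht, rfl⟩ := MuAux.mem_f1 hx
      obtain ⟨t', ht', he⟩ := MuAux.mem_f1 hx'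
      exact hne (MuAux.bs_apart (Finset.mem_filter.mp hi).2 (Finset.mem_filter.mp hi').2 ht ht' he)
    have hb1 : (S1.biUnion MuAux.f1).card = 4 * S1.card :=
      MuAux.count_bound _ _ (fun i _ => MuAux.card_f1 hn4 i) hD1
    rcases hP.1 with hrun | hall
    · -- second row is a run
      obtain ⟨i0, hi0⟩ := hrun.2.1
      have hjfact : ∀ j ∈ S2, 3 ≤ MuAux.blen P.row2 j ∧ MuAux.blen P.row2 j < n ∧
          P.row2 (j - 1) = false ∧
          (∀ a < MuAux.blen P.row2 j, P.row2 (j + (a : ℕ)) = true) := by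
        intro j hj
        have hbs : Pattern.BlockStart P.row2 j := (Finset.mem_filter.mp hj).2
        have hex := MuAux.exists_off j hi0
        have hlf := MuAux.blen_false hex
        have htr : ∀ a < MuAux.blen P.row2 j, P.row2 (j + (a : ℕ)) = true :=
          fun a ha => MuAux.blen_true hex ha
        refine ⟨?_, MuAux.blen_lt_n j hi0, hbs.1, htr⟩
        by_contra hc
        push_neg at hc
        have hcc : MuAux.blen P.row2 j = 0 ∨ MuAux.blen P.row2 j = 1 ∨
            MuAux.blen P.row2 j = 2 := by omega
        rcases hcc with h | h | h <;> rw [h] at hlf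
        · simp only [Nat.cast_zero, add_zero] at hlf
          rw [hbs.2.1] at hlf; cases hlf
        · simp only [Nat.cast_one] at hlf
          rw [hbs.2.2.1] at hlf; cases hlf
        · rw [show ((2 : ℕ) : ZMod n) = 2 by push_cast; ring] at hlf
          rw [hbs.2.2.2] at hlf; cases hlf
      have histr := fun i (hi : i ∈ S1) =>
        MuAux.S1_struct P hP hrun (Finset.mem_filter.mp hi).2
      -- disjointness within the second row
      have hD2 : ∀ j ∈ S2, ∀ j' ∈ S2, j ≠ j' →
          Disjoint (MuAux.f2 P.row2 j) (MuAux.f2 P.row2 j') := by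
        intro j hj j' hj' hne
        obtain ⟨h3, hnn, h1, ht⟩ := hjfact j hj
        obtain ⟨h3', hnn', h1', ht'⟩ := hjfact j' hj'
        rw [Finset.disjoint_left]
        intro x hx hx'
        rcases MuAux.mem_f2 hx with hs | ⟨a, haa, hxa⟩ <;>
          rcases MuAux.mem_f2 hx' with hs' | ⟨a', haa', hxa'⟩
        · rw [hs] at hs'
          exact hne (by linear_combination hs')
        · have halt' : a' < MuAux.blen P.row2 j' := by omega
          have := ht' a' halt'
          rw [← hxa', hs, h1] at this; cases this
        · have halt : a < MuAux.blen P.row2 j := by omega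
          have := ht a halt
          rw [← hxa, hs', h1'] at this; cases this
        · have halt : a < MuAux.blen P.row2 j := by omega
          have halt' : a' < MuAux.blen P.row2 j' := by omega
          exact hne (MuAux.start_unique h1 ht h1' ht' halt halt' (by rw [← hxa, hxa']))
      -- disjointness across the rows
      have hD12 : ∀ i ∈ S1, ∀ j ∈ S2, Disjoint (MuAux.f1 i) (MuAux.f2 P.row2 j) := by
        intro i hi j hj
        obtain ⟨jb, k, hjb1, hjbt, hk2, hk3, hbn, hij⟩ := histr i hi
        obtain ⟨h3j, hjn, hj1, hjt⟩ := hjfact j hj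
        rw [Finset.disjoint_left]
        intro x hx hx'
        obtain ⟨t, ht, rfl⟩ := MuAux.mem_f1 hx
        have hx2 : i + ((t : ℕ) : ZMod n) = jb + ((k + t : ℕ) : ZMod n) := by
          rw [hij]; push_cast; ring
        have hktlt : k + t < MuAux.blen P.row2 jb := by omega
        rcases MuAux.mem_f2 hx' with hs | ⟨a, haa, hxa⟩
        · have htrue := hjbt _ hktlt
          rw [← hx2, hs, hj1] at htrue; cases htrue
        · have halt : a < MuAux.blen P.row2 j := by omega
          have heq : jb + ((k + t : ℕ) : ZMod n) = j + ((a : ℕ) : ZMod n) := by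
            rw [← hx2, hxa]
          have hjj : jb = j := MuAux.start_unique hjb1 hjbt hj1 hjt hktlt halt heq
          subst hjj
          have hta : k + t = a :=
            MuAux.add_nat_inj jb (by omega) (by omega) heq
          omega
      have hb2 : (S2.biUnion (MuAux.f2 P.row2)).card = 4 * S2.card :=
        MuAux.count_bound _ _
          (fun j hj => MuAux.card_f2 (hjfact j hj).1 (hjfact j hj).2.1) hD2
      have hdisj : Disjoint (S1.biUnion MuAux.f1) (S2.biUnion (MuAux.f2 P.row2)) := by
        rw [Finset.disjoint_left]
        intro x hx hx'
        rw [Finset.mem_biUnion] at hx hx'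
        obtain ⟨i, hi, hxi⟩ := hx
        obtain ⟨j, hj, hxj⟩ := hx'
        exact (Finset.disjoint_left.mp (hD12 i hi j hj)) hxi hxj
      have hcard : 4 * S1.card + 4 * S2.card ≤ n := by
        have hle := Finset.card_le_univ ((S1.biUnion MuAux.f1) ∪ (S2.biUnion (MuAux.f2 P.row2)))
        rw [Finset.card_union_of_disjoint hdisj, hb1, hb2, ZMod.card] at hle
        exact hle
      omega
    · -- second row is all ones
      have hS2e : S2 = ∅ := by
        apply Finset.eq_empty_of_forall_notMem
        intro j hj
        have hbs := (Finset.mem_filter.mp hj).2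
        have := hbs.1
        rw [hall (j - 1)] at this; cases this
      have hcard : 4 * S1.card ≤ n := by
        have hle := Finset.card_le_univ (S1.biUnion MuAux.f1)
        rw [hb1, ZMod.card] at hle
        exact hle
      have : S2.card = 0 := by rw [hS2e]; rfl
      omega
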